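/- arXiv:0905.0591 — 5 statements merged into one kernel-verified Lean document; each statement's English description precedes it below -/
import Mathlib

section
/- Let R be an integral domain and F a finitely generated free abelian group. Then every unit of the group ring R[F] is of the form r·f where r is a unit of R and f ∈ F. -/
/-!
`ℤⁿ` has two unique sums (it is a product of ordered groups): if `u * v = 1` and `u`, `v` are
not both monomials, there are two distinct pairs `(a, b)` of exponents in their supports whose
sum `a + b` is attained only once. The coefficient of `u * v` at such a sum is a product of
nonzero coefficients, so both sums would be `0`, the only exponent of `1`, contradicting
uniqueness. Hence `u` is a monomial, and a uniquely attained pair shows its coefficient is a unit.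
-/

open Finset

namespace AddMonoidAlgebra

variable {R A : Type*}

theorem add_eq_zero_and_coeff_mul_eq_one_of_uniqueAdd [Semiring R] [NoZeroDivisors R]
    [AddZeroClass A] {u v : R[A]} (h : u * v = 1) {a b : A} (ha : a ∈ u.coeff.support)
    (hb : b ∈ v.coeff.support) (huniq : UniqueAdd u.coeff.support v.coeff.support a b) :
    a + b = 0 ∧ u.coeff a * v.coeff b = 1 := by
  classical
  have hcoeff : (u * v).coeff (a + b) = u.coeff a * v.coeff b :=
    coeff_mul_add_of_uniqueAdd huniq
  have hne : u.coeff a * v.coeff b ≠ 0 :=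
    mul_ne_zero (Finsupp.mem_support_iff.1 ha) (Finsupp.mem_support_iff.1 hb)
  rw [h, one_def, coeff_single, Finsupp.single_apply] at hcoeff
  by_cases hab : a + b = 0
  · rw [if_pos hab.symm] at hcoeff
    exact ⟨hab, hcoeff.symm⟩
  · rw [if_neg (Ne.symm hab)] at hcoeff
    exact absurd hcoeff.symm hne

theorem card_support_mul_card_support_le_one_of_mul_eq_one [Semiring R] [NoZeroDivisors R]
    [AddZeroClass A] [TwoUniqueSums A] {u v : R[A]} (h : u * v = 1) :
    #u.coeff.support * #v.coeff.support ≤ 1 := by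
  by_contra! hcard
  obtain ⟨p, hp, q, hq, hpq, hpuniq, hquniq⟩ := TwoUniqueSums.uniqueAdd_of_one_lt_card hcard
  rw [mem_product] at hp hq
  have hp0 := (add_eq_zero_and_coeff_mul_eq_one_of_uniqueAdd h hp.1 hp.2 hpuniq).1
  have hq0 := (add_eq_zero_and_coeff_mul_eq_one_of_uniqueAdd h hq.1 hq.2 hquniq).1
  obtain ⟨h1, h2⟩ := hpuniq hq.1 hq.2 (hq0.trans hp0.symm)
  exact hpq (Prod.ext h1 h2).symm

theorem exists_isUnit_eq_single_of_isUnit [CommSemiring R] [NoZeroDivisors R] [Nontrivial R]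
    [AddMonoid A] [TwoUniqueSums A] {u : R[A]} (hu : IsUnit u) :
    ∃ (r : R) (a : A), IsUnit r ∧ u = single a r := by
  obtain ⟨v, h⟩ := hu.exists_right_inv
  have hu0 : u.coeff.support.Nonempty := by
    simpa [← coeff_eq_zero] using left_ne_zero_of_mul_eq_one h
  have hv0 : v.coeff.support.Nonempty := by
    simpa [← coeff_eq_zero] using right_ne_zero_of_mul_eq_one h
  obtain ⟨a, ha, b, hb, huniq⟩ := UniqueSums.uniqueAdd_of_nonempty hu0 hv0
  have hunit := (add_eq_zero_and_coeff_mul_eq_one_of_uniqueAdd h ha hb huniq).2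
  have hsupp : u.coeff.support ⊆ {a} := by
    have hprod := card_support_mul_card_support_le_one_of_mul_eq_one h
    have hcard : #u.coeff.support ≤ 1 := by nlinarith [hv0.card_pos]
    exact fun x hx => mem_singleton.2 (card_le_one.1 hcard x hx a ha)
  exact ⟨u.coeff a, a, IsUnit.of_mul_eq_one _ hunit,
    coeff_injective (Finsupp.support_subset_singleton.1 hsupp)⟩

end AddMonoidAlgebra

/-- Every unit of the group ring `R[F]` of a finitely generated free abelian group `F ≅ ℤⁿ`
over an integral domain `R` is of the form `r·f` with `r` a unit of `R` and `f ∈ F`. -/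
theorem units_of_groupRing_free_abelian
    (R : Type*) [CommRing R] [IsDomain R] (n : ℕ)
    (u : AddMonoidAlgebra R (Fin n →₀ ℤ)) (hu : IsUnit u) :
    ∃ (r : R) (f : Fin n →₀ ℤ), IsUnit r ∧ u = AddMonoidAlgebra.single f r :=
  AddMonoidAlgebra.exists_isUnit_eq_single_of_isUnit hu
end

section
/- Let K be a division ring and γ: K → K a ring automorphism. Then the skew Laurent polynomial ring K[t^{±1}] with multiplication determined by t·a = γ(a)·t for a ∈ K is a (left and right) principal ideal domain. -/
/-!
Measure a nonzero element by the width `deg - ord` of its support in the basis `(tⁿ)`. The top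
coefficient of a product is the top coefficient of the left factor times the `γ^deg`-twist of
that of the right factor, so there are no zero divisors. Given `g ≠ 0` and `y` of at least the
same width, multiplying `g` on either side by a suitable monomial `a tᵏ` aligns its top coefficient
with that of `y` while keeping the support inside that of `y`, so subtracting lowers the width.
With this division algorithm on both sides, an element of minimal width in a nonzero one-sided
ideal generates it.
-/

theorem IsPrincipalIdealRing.of_exists_sub_mul_lt {R : Type*} [Ring R] (f : R → ℕ)
    (hf : ∀ g y : R, g ≠ 0 → y ≠ 0 → f g ≤ f y → ∃ r, y - r * g = 0 ∨ f (y - r * g) < f y) :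
    IsPrincipalIdealRing R := by
  refine ⟨fun I => ?_⟩
  by_cases hI : I = ⊥
  · exact hI ▸ bot_isPrincipal
  obtain ⟨g, ⟨hgI, hg⟩, hmin⟩ := exists_minimalFor_of_wellFoundedLT
    (fun x => x ∈ I ∧ x ≠ 0) f ((Submodule.ne_bot_iff I).mp hI)
  refine ⟨g, le_antisymm (fun y hy => ?_) ((Ideal.span_singleton_le_iff_mem _).mpr hgI)⟩
  induction hn : f y using Nat.strong_induction_on generalizing y with
  | _ n ih =>
    by_cases hy0 : y = 0
    · exact hy0 ▸ zero_mem _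
    have hgy : f g ≤ f y := (le_total _ _).elim id (hmin ⟨hy, hy0⟩)
    obtain ⟨r, hr⟩ := hf g y hg hy0 hgy
    have hrg : r * g ∈ Ideal.span {g} := Ideal.mem_span_singleton'.mpr ⟨r, rfl⟩
    rw [← sub_add_cancel y (r * g)]
    refine add_mem ?_ hrg
    rcases hr with hr | hr
    · exact hr ▸ zero_mem _
    · exact ih _ (hn ▸ hr) _ (sub_mem hy (I.mul_mem_left r hgI)) rfl

open Finset MulOpposite

namespace SkewLaurent

section Width

variable {R M : Type*} [Semiring R] [AddCommMonoid M] [Module R M] (B : Module.Basis ℤ R M)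

noncomputable def deg (x : M) : ℤ :=
  if h : (B.repr x).support.Nonempty then (B.repr x).support.max' h else 0

noncomputable def ord (x : M) : ℤ :=
  if h : (B.repr x).support.Nonempty then (B.repr x).support.min' h else 0

noncomputable def width (x : M) : ℕ := (deg B x - ord B x).toNat

variable {B}

theorem support_subset_Icc_ord_deg (x : M) : (B.repr x).support ⊆ Icc (ord B x) (deg B x) :=
  fun n hn => by
    have h : (B.repr x).support.Nonempty := ⟨n, hn⟩
    simp only [deg, ord, dif_pos h, mem_Icc]
    exact ⟨min'_le _ _ hn, le_max' _ _ hn⟩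

theorem deg_mem_support {x : M} (hx : x ≠ 0) : deg B x ∈ (B.repr x).support := by
  have h : (B.repr x).support.Nonempty := by simpa using hx
  simpa only [deg, dif_pos h] using max'_mem _ h

theorem ord_mem_support {x : M} (hx : x ≠ 0) : ord B x ∈ (B.repr x).support := by
  have h : (B.repr x).support.Nonempty := by simpa using hx
  simpa only [ord, dif_pos h] using min'_mem _ h

theorem support_subset_Icc_deg_sub_width (x : M) :
    (B.repr x).support ⊆ Icc (deg B x - width B x) (deg B x) := by
  intro n hn
  have := mem_Icc.mp (support_subset_Icc_ord_deg x hn)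
  rw [mem_Icc, width]
  omega

theorem le_deg_of_mem_support {x : M} {n : ℤ} (hn : n ∈ (B.repr x).support) : n ≤ deg B x :=
  (mem_Icc.mp (support_subset_Icc_ord_deg x hn)).2

theorem width_le_of_support_subset {x : M} (hx : x ≠ 0) {lo hi : ℤ}
    (h : (B.repr x).support ⊆ Icc lo hi) : (width B x : ℤ) ≤ hi - lo := by
  have hdeg := mem_Icc.mp (h (deg_mem_support hx))
  have hord := mem_Icc.mp (h (ord_mem_support hx))
  rw [width]
  omega

end Width

theorem sub_eq_zero_or_width_sub_lt {R M : Type*} [Ring R] [AddCommGroup M] [Module R M]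
    {B : Module.Basis ℤ R M} {y z : M}
    (hz : (B.repr z).support ⊆ Icc (deg B y - width B y) (deg B y))
    (htop : B.repr z (deg B y) = B.repr y (deg B y)) :
    y - z = 0 ∨ width B (y - z) < width B y := by
  refine or_iff_not_imp_left.mpr fun hyz => ?_
  suffices (width B (y - z) : ℤ) ≤ deg B y - 1 - (deg B y - width B y) by omega
  refine width_le_of_support_subset hyz fun n hn => ?_
  rw [map_sub] at hn
  have hmem := mem_Icc.mp <| (mem_union.mp (Finsupp.support_sub hn)).elim
    (support_subset_Icc_deg_sub_width y ·) (hz ·)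
  have hne : n ≠ deg B y := by
    rintro rfl
    simp [htop] at hn
  rw [mem_Icc]
  omega

section Ring

variable {K L : Type*} [Ring K] [Ring L]

theorem semiconjBy_zpow {γ : K ≃+* K} {i : K →+* L} {t : Lˣ}
    (hcomm : ∀ a : K, (t : L) * i a = i (γ a) * (t : L)) (n : ℤ) (a : K) :
    SemiconjBy ((t ^ n : Lˣ) : L) (i a) (i ((γ ^ n) a)) := by
  induction n using Int.induction_on generalizing a with
  | zero => simp [SemiconjBy]
  | succ n ih =>
    rw [zpow_add_one, zpow_add_one, Units.val_mul, RingAut.mul_apply]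
    exact (ih (γ a)).mul_left (hcomm a)
  | pred n ih =>
    rw [zpow_sub_one, zpow_sub_one, Units.val_mul, RingAut.mul_apply]
    refine (ih (γ⁻¹ a)).mul_left (SemiconjBy.units_inv_symm_left ?_)
    simpa [SemiconjBy] using hcomm (γ⁻¹ a)

theorem monomial_mul_monomial {γ : K ≃+* K} {i : K →+* L} {t : Lˣ}
    (hcomm : ∀ a : K, (t : L) * i a = i (γ a) * (t : L)) (a b : K) (m n : ℤ) :
    i a * ((t ^ m : Lˣ) : L) * (i b * ((t ^ n : Lˣ) : L))
      = i (a * (γ ^ m) b) * ((t ^ (m + n) : Lˣ) : L) := by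
  rw [mul_assoc, ← mul_assoc _ (i b), semiconjBy_zpow hcomm m b, zpow_add, Units.val_mul,
    map_mul]
  noncomm_ring

variable [Module K L]

structure IsSkewLaurent (γ : K ≃+* K) (i : K →+* L) (t : Lˣ) (B : Module.Basis ℤ K L) : Prop where
  unit_mul : ∀ a : K, (t : L) * i a = i (γ a) * (t : L)
  smul_eq_mul : ∀ (a : K) (x : L), a • x = i a * x
  basis_apply : ∀ n : ℤ, B n = ((t ^ n : Lˣ) : L)

variable {γ : K ≃+* K} {i : K →+* L} {t : Lˣ} {B : Module.Basis ℤ K L}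

namespace IsSkewLaurent

variable (h : IsSkewLaurent γ i t B)
include h

theorem repr_monomial (a : K) (n : ℤ) :
    B.repr (i a * ((t ^ n : Lˣ) : L)) = Finsupp.single n a := by
  rw [← h.basis_apply, ← h.smul_eq_mul, map_smul, B.repr_self, Finsupp.smul_single_one]

theorem sum_monomial_repr (x : L) :
    ((B.repr x).sum fun n a => i a * ((t ^ n : Lˣ) : L)) = x := by
  conv_rhs => rw [← B.linearCombination_repr x]
  simp only [Finsupp.linearCombination_apply, h.smul_eq_mul, h.basis_apply]

theorem repr_mul (x y : L) :
    B.repr (x * y) = (B.repr x).sum fun m a => (B.repr y).sum fun n b =>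
      Finsupp.single (m + n) (a * (γ ^ m) b) := by
  conv_lhs => rw [← h.sum_monomial_repr x, ← h.sum_monomial_repr y]
  rw [Finsupp.sum_mul]
  simp only [Finsupp.mul_sum, monomial_mul_monomial h.unit_mul, map_finsuppSum, h.repr_monomial]

theorem support_repr_mul_subset {x y : L} {l₁ h₁ l₂ h₂ : ℤ}
    (hx : (B.repr x).support ⊆ Icc l₁ h₁) (hy : (B.repr y).support ⊆ Icc l₂ h₂) :
    (B.repr (x * y)).support ⊆ Icc (l₁ + l₂) (h₁ + h₂) := by
  classical
  rw [h.repr_mul]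
  refine Finsupp.support_sum.trans (biUnion_subset.mpr fun m hm => ?_)
  refine Finsupp.support_sum.trans (biUnion_subset.mpr fun n hn => ?_)
  refine Finsupp.support_single_subset.trans (singleton_subset_iff.mpr ?_)
  have := mem_Icc.mp (hx hm)
  have := mem_Icc.mp (hy hn)
  rw [mem_Icc]
  omega

theorem repr_mul_apply_add {x y : L} {h₁ h₂ : ℤ}
    (hx : ∀ m ∈ (B.repr x).support, m ≤ h₁) (hy : ∀ n ∈ (B.repr y).support, n ≤ h₂) :
    B.repr (x * y) (h₁ + h₂) = B.repr x h₁ * (γ ^ h₁) (B.repr y h₂) := by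
  rw [h.repr_mul, Finsupp.sum_apply, Finsupp.sum_eq_single h₁]
  · rw [Finsupp.sum_apply, Finsupp.sum_eq_single h₂]
    · simp
    · intro n _ hne
      exact Finsupp.single_eq_of_ne (by omega)
    · simp
  · intro m hm hne
    rw [Finsupp.sum_apply]
    refine Finset.sum_eq_zero fun n hn => Finsupp.single_eq_of_ne ?_
    have := hx m (Finsupp.mem_support_iff.mpr hm)
    have := hy n hn
    omega
  · simp

theorem noZeroDivisors [NoZeroDivisors K] : NoZeroDivisors L := by
  refine ⟨fun {x y} hxy => ?_⟩
  by_contra! hne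
  have hlead := h.repr_mul_apply_add (fun _ => le_deg_of_mem_support (x := x))
    (fun _ => le_deg_of_mem_support (x := y))
  rw [hxy, map_zero, Finsupp.zero_apply] at hlead
  refine mul_ne_zero ?_ ?_ hlead.symm
  · exact Finsupp.mem_support_iff.mp (deg_mem_support hne.1)
  · exact (map_ne_zero_iff _ (γ ^ _).injective).mpr
      (Finsupp.mem_support_iff.mp (deg_mem_support hne.2))

end IsSkewLaurent

end Ring

namespace IsSkewLaurent

variable {K L : Type*} [DivisionRing K] [Ring L] [Module K L] {γ : K ≃+* K} {i : K →+* L}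
  {t : Lˣ} {B : Module.Basis ℤ K L} (h : IsSkewLaurent γ i t B)
include h

theorem support_repr_monomial_subset (a : K) (k : ℤ) :
    (B.repr (i a * ((t ^ k : Lˣ) : L))).support ⊆ Icc k k := by
  rw [h.repr_monomial, Icc_self]
  exact Finsupp.support_single_subset

theorem exists_sub_mul_eq_zero_or_width_lt {g : L} (hg : g ≠ 0) (y : L)
    (hgy : width B g ≤ width B y) :
    ∃ r, y - r * g = 0 ∨ width B (y - r * g) < width B y := by
  set k := deg B y - deg B g
  have hlead : (γ ^ k) (B.repr g (deg B g)) ≠ 0 :=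
    (map_ne_zero_iff _ (γ ^ k).injective).mpr (Finsupp.mem_support_iff.mp (deg_mem_support hg))
  obtain ⟨a, ha⟩ : ∃ a, a * (γ ^ k) (B.repr g (deg B g)) = B.repr y (deg B y) :=
    ⟨_, inv_mul_cancel_right₀ hlead _⟩
  have hr := h.support_repr_monomial_subset a k
  refine ⟨i a * ((t ^ k : Lˣ) : L), sub_eq_zero_or_width_sub_lt ?_ ?_⟩
  · refine (h.support_repr_mul_subset hr (support_subset_Icc_deg_sub_width g)).trans
      (Icc_subset_Icc ?_ ?_) <;> omega
  · have hk : k + deg B g = deg B y := by omega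
    rw [← hk, h.repr_mul_apply_add (fun _ hm => (mem_Icc.mp (hr hm)).2)
      (fun _ => le_deg_of_mem_support), h.repr_monomial, hk]
    simpa using ha

theorem exists_sub_mul_eq_zero_or_width_lt' {g : L} (hg : g ≠ 0) (y : L)
    (hgy : width B g ≤ width B y) :
    ∃ r, y - g * r = 0 ∨ width B (y - g * r) < width B y := by
  set k := deg B y - deg B g
  have hlead : B.repr g (deg B g) ≠ 0 := Finsupp.mem_support_iff.mp (deg_mem_support hg)
  obtain ⟨a, ha⟩ : ∃ a, B.repr g (deg B g) * (γ ^ deg B g) a = B.repr y (deg B y) :=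
    ⟨(γ ^ deg B g).symm ((B.repr g (deg B g))⁻¹ * B.repr y (deg B y)), by
      rw [RingEquiv.apply_symm_apply, mul_inv_cancel_left₀ hlead]⟩
  have hr := h.support_repr_monomial_subset a k
  refine ⟨i a * ((t ^ k : Lˣ) : L), sub_eq_zero_or_width_sub_lt ?_ ?_⟩
  · refine (h.support_repr_mul_subset (support_subset_Icc_deg_sub_width g) hr).trans
      (Icc_subset_Icc ?_ ?_) <;> omega
  · have hk : deg B g + k = deg B y := by omega
    rw [← hk, h.repr_mul_apply_add (fun _ => le_deg_of_mem_support)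
      (fun _ hm => (mem_Icc.mp (hr hm)).2), h.repr_monomial, hk]
    simpa using ha

end IsSkewLaurent

end SkewLaurent

/-- Let `K` be a division ring and `γ : K ≃ K` a ring automorphism. A skew Laurent
polynomial ring over `(K, γ)` is a ring `L` containing `K` (via `i`), with a distinguished
unit `t` satisfying `t·a = γ(a)·t`, which is free as a left `K`-module with basis
`{tⁿ : n ∈ ℤ}`. Any such ring is a domain in which every left ideal and every right ideal
is principal (i.e. a left and right PID). -/
theorem skewLaurent_isPrincipalIdealDomain
    (K : Type*) [DivisionRing K] (γ : K ≃+* K)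
    (L : Type*) [Ring L] (i : K →+* L) (t : Lˣ)
    (hcomm : ∀ a : K, (t : L) * i a = i (γ a) * (t : L))
    [Module K L] (hsmul : ∀ (a : K) (x : L), a • x = i a * x)
    (B : Module.Basis ℤ K L) (hB : ∀ n : ℤ, B n = ((t ^ n : Lˣ) : L)) :
    IsDomain L ∧ IsPrincipalIdealRing L ∧ IsPrincipalIdealRing Lᵐᵒᵖ := by
  have h : SkewLaurent.IsSkewLaurent γ i t B := ⟨hcomm, hsmul, hB⟩
  have : Nontrivial L := ⟨⟨B 0, 0, B.ne_zero 0⟩⟩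
  have := h.noZeroDivisors
  refine ⟨NoZeroDivisors.to_isDomain L,
    .of_exists_sub_mul_lt (SkewLaurent.width B) fun g y hg _ hgy =>
      h.exists_sub_mul_eq_zero_or_width_lt hg y hgy,
    .of_exists_sub_mul_lt (SkewLaurent.width B ∘ unop) fun g y hg _ hgy => ?_⟩
  obtain ⟨r, hr⟩ :=
    h.exists_sub_mul_eq_zero_or_width_lt' ((unop_ne_zero_iff g).mpr hg) (unop y) hgy
  refine ⟨op r, ?_⟩
  rwa [← unop_eq_zero_iff, Function.comp_apply, Function.comp_apply, unop_sub, unop_mul, unop_op]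
end

section
/- Every nonzero integer polynomial p ∈ ℤ[t] has Mahler measure M(p) ≥ 1, and if p is nonzero with M(p) = 1 then every nonzero complex root of p is a root of unity (Kronecker's theorem). -/
open Polynomial

/-- The Mahler measure of a complex polynomial `p = a·∏(t − αᵢ)`:
`M(p) = |a| · ∏ max(1, |αᵢ|)`. -/
noncomputable def mahlerMeasure (p : Polynomial ℂ) : ℝ :=
  ‖p.leadingCoeff‖ * ((p.roots).map (fun z => max 1 ‖z‖)).prod

/-- Jensen's formula identifies the root-product definition with Mathlib's, which is defined as
the exponential of the circle average of `log ‖p‖`. -/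
theorem mahlerMeasure_eq_polynomial_mahlerMeasure (p : ℂ[X]) :
    _root_.mahlerMeasure p = p.mahlerMeasure :=
  (mahlerMeasure_eq_leadingCoeff_mul_prod_roots p).symm

/-- Every nonzero integer polynomial has Mahler measure at least `1`, and if the Mahler
measure equals `1` then every nonzero complex root is a root of unity
(Kronecker's theorem). -/
theorem mahlerMeasure_int_ge_one_and_kronecker (p : Polynomial ℤ) (hp : p ≠ 0) :
    1 ≤ _root_.mahlerMeasure (p.map (Int.castRingHom ℂ)) ∧
    (_root_.mahlerMeasure (p.map (Int.castRingHom ℂ)) = 1 →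
      ∀ z : ℂ, z ≠ 0 → (p.map (Int.castRingHom ℂ)).IsRoot z →
        ∃ m : ℕ, 0 < m ∧ z ^ m = 1) := by
  rw [mahlerMeasure_eq_polynomial_mahlerMeasure]
  refine ⟨one_le_mahlerMeasure_of_ne_zero hp, fun hM z hz₀ hz ↦ ?_⟩
  have hz_mem : z ∈ p.aroots ℂ := by
    rw [aroots_def, algebraMap_int_eq]
    exact (mem_roots (Polynomial.map_ne_zero_iff (Int.castRingHom ℂ).injective_int |>.mpr hp)).mpr hz
  exact pow_eq_one_of_mahlerMeasure_eq_one hM hz₀ hz_mem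
end

section
/- Let Λ = ℤ[t^{±1}], let p ∈ Λ be a polynomial with |p(1)| = 1, and let n ≥ 1. Then the abelian group Λ/(p(t), t^n − 1) is finite if and only if p(ζ) ≠ 0 for every n-th root of unity ζ, and in that case its order equals |∏_{j=0}^{n-1} p(e^{2πij/n})|. -/
/-!
Put `S = ℤ[X]/(Xⁿ - 1)`, free over `ℤ` with basis `1, x, …, xⁿ⁻¹`. Since `t ↦ x` identifies
`Λ/(tⁿ - 1)` with `S`, the group `Λ/(p, tⁿ - 1)` is `S/p(x)S`, the cokernel of multiplication by
`p(x)`; when its determinant, the norm `N(p(x))`, is nonzero, the cokernel has order `|N(p(x))|`.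
Each `ζʲ`, `ζ = e^{2πi/n}`, gives a ring map `S → ℂ`, `x ↦ ζʲ`. With `V` the Vandermonde matrix
of the `ζʲ` and `A` the matrix of multiplication by `p(x)`, `V A = diag(p(ζʲ)) V`, so
`N(p(x)) = ∏ⱼ p(ζʲ)`. Conversely, if `p(z) = 0` with `zⁿ = 1`, evaluation at `z` is a ring map
from the quotient to `ℂ`, so the quotient has characteristic zero and is infinite.
-/

open LaurentPolynomial

/-- Evaluation of an integral Laurent polynomial at a nonzero complex number `z`, as the
ring homomorphism `ℤ[t,t⁻¹] → ℂ` sending `tⁿ ↦ zⁿ`. -/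
noncomputable def laurentEval (z : ℂˣ) : LaurentPolynomial ℤ →ₐ[ℤ] ℂ :=
  AddMonoidAlgebra.lift ℤ ℂ ℤ ((Units.coeHom ℂ).comp (zpowersHom ℂˣ z))

open Polynomial

theorem LinearMap.injective_of_det_ne_zero {R M : Type*} [CommRing R] [IsDomain R]
    [AddCommGroup M] [Module R M] [Module.Free R M] [Module.Finite R M] {f : M →ₗ[R] M}
    (hf : LinearMap.det f ≠ 0) : Function.Injective f := by
  classical
  let b := Module.Free.chooseBasis R M
  rw [← LinearMap.det_toMatrix b] at hf
  intro x y hxy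
  refine b.repr.injective (Finsupp.ext (congrFun (Matrix.mulVec_injective_of_det_ne_zero hf ?_)))
  simp only [LinearMap.toMatrix_mulVec_repr, hxy]

theorem LinearMap.natCard_quotient_range_eq_natAbs_det {M : Type*} [AddCommGroup M]
    [Module.Free ℤ M] [Module.Finite ℤ M] (f : M →ₗ[ℤ] M) (hf : LinearMap.det f ≠ 0) :
    Nat.card (M ⧸ LinearMap.range f) = (LinearMap.det f).natAbs :=
  (Submodule.natAbs_det_equiv (LinearMap.range f)
    (LinearEquiv.ofInjective f (injective_of_det_ne_zero hf))).symm

theorem Algebra.natCard_quotient_span_singleton_eq_natAbs_norm {S : Type*} [CommRing S]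
    [Module.Free ℤ S] [Module.Finite ℤ S] (a : S) (ha : Algebra.norm ℤ a ≠ 0) :
    Nat.card (S ⧸ Ideal.span {a}) = (Algebra.norm ℤ a).natAbs := by
  have hrange : (Ideal.span {a}).restrictScalars ℤ = LinearMap.range (Algebra.lmul ℤ S a) := by
    ext x
    simp [Ideal.mem_span_singleton', eq_comm, mul_comm]
  rw [Nat.card_congr (Submodule.Quotient.restrictScalarsEquiv ℤ (Ideal.span {a})).toEquiv.symm,
    hrange]
  exact LinearMap.natCard_quotient_range_eq_natAbs_det _ ha

theorem Algebra.algebraMap_norm_eq_prod_of_pow_basis {R S K : Type*} [CommRing R] [CommRing S]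
    [Algebra R S] [CommRing K] [IsDomain K] [Algebra R K] {d : ℕ} (b : Module.Basis (Fin d) R S)
    {x : S} (hb : ∀ i, b i = x ^ (i : ℕ)) (ψ : Fin d → S →ₐ[R] K)
    (hψ : Function.Injective fun j => ψ j x) (a : S) :
    algebraMap R K (Algebra.norm R a) = ∏ j, ψ j a := by
  classical
  set A := Algebra.leftMulMatrix b a
  set V := Matrix.vandermonde fun j => ψ j x
  have hcol : ∀ k, ∑ i, A i k • b i = a * b k := fun k => by
    simp only [A, Algebra.leftMulMatrix_eq_repr_mul, b.sum_repr]
  have hVA : V * A.map (algebraMap R K) = Matrix.diagonal (fun j => ψ j a) * V := by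
    ext j k
    rw [Matrix.mul_apply, Matrix.diagonal_mul]
    calc ∑ i, V j i * A.map (algebraMap R K) i k
        = ψ j (∑ i, A i k • b i) := by
          simp [V, hb, Algebra.smul_def, mul_comm]
      _ = ψ j a * V j k := by rw [hcol, map_mul, hb, map_pow]; rfl
  have hV : V.det ≠ 0 := Matrix.det_vandermonde_ne_zero_iff.mpr hψ
  rw [Algebra.norm_eq_matrix_det b, RingHom.map_det]
  apply mul_left_cancel₀ hV
  simpa [Matrix.det_mul, Matrix.det_diagonal, mul_comm] using congrArg Matrix.det hVA

theorem Ideal.infinite_quotient_of_le_ker {R A : Type*} [CommRing R] [Ring A] [CharZero A]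
    {I : Ideal R} (f : R →+* A) (h : I ≤ RingHom.ker f) : Infinite (R ⧸ I) :=
  have := (Ideal.Quotient.lift I f h).charZero
  inferInstance

noncomputable def RingHom.quotientSupKerEquivOfSurjective {A B : Type*} [CommRing A] [CommRing B]
    (φ : A →+* B) (hφ : Function.Surjective φ) (I : Ideal A) :
    A ⧸ (I ⊔ RingHom.ker φ) ≃+* B ⧸ I.map φ :=
  have hker : RingHom.ker ((Ideal.Quotient.mk (I.map φ)).comp φ) = I ⊔ RingHom.ker φ := by
    rw [← RingHom.comap_ker, Ideal.mk_ker, Ideal.comap_map_of_surjective φ hφ]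
    rfl
  (Ideal.quotEquivOfEq hker.symm).trans
    (RingHom.quotientKerEquivOfSurjective (Ideal.Quotient.mk_surjective.comp hφ))

namespace LaurentPolynomial

theorem ringHom_ext {R A : Type*} [CommSemiring R] [Semiring A] {f g : R[T;T⁻¹] →+* A}
    (hC : ∀ r, f (C r) = g (C r)) (hT : ∀ k, f (T k) = g (T k)) : f = g :=
  AddMonoidAlgebra.ringHom_ext hC hT

theorem comp_eval₂ {R S B : Type*} [CommSemiring R] [CommSemiring S] [CommSemiring B]
    (f : R →+* S) (x : Sˣ) (ψ : S →+* B) :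
    ψ.comp (eval₂ f x) = eval₂ (ψ.comp f) (Units.map ψ x) :=
  ringHom_ext (fun r => by simp) fun k => by
    simp only [RingHom.coe_comp, Function.comp_apply, eval₂_T]
    rw [← map_zpow, Units.coe_map]
    rfl

end LaurentPolynomial

theorem laurentEval_eq_eval₂ (z : ℂˣ) (f : ℤ[T;T⁻¹]) :
    laurentEval z f = eval₂ (algebraMap ℤ ℂ) z f := by
  refine DFunLike.congr_fun (ringHom_ext (f := (laurentEval z : ℤ[T;T⁻¹] →+* ℂ)) (fun r => ?_)
    fun k => ?_) f
  · simp
  · change laurentEval z (AddMonoidAlgebra.single k 1) = _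
    rw [eval₂_T, laurentEval, AddMonoidAlgebra.lift_single, one_smul]
    rfl

section CyclicQuotient

variable (R : Type*) [CommRing R] {n : ℕ}

theorem Polynomial.monic_X_pow_sub_one (hn : n ≠ 0) : (X ^ n - 1 : R[X]).Monic := by
  simpa using monic_X_pow_sub_C (1 : R) hn

theorem AdjoinRoot.root_X_pow_sub_one_pow : AdjoinRoot.root (X ^ n - 1 : R[X]) ^ n = 1 := by
  have := AdjoinRoot.eval₂_root (X ^ n - 1 : R[X])
  simpa [sub_eq_zero] using this

noncomputable def AdjoinRoot.rootUnitOfXPowSubOne (hn : n ≠ 0) : (AdjoinRoot (X ^ n - 1 : R[X]))ˣ :=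
  Units.ofPowEqOne _ n (root_X_pow_sub_one_pow R) hn

noncomputable def LaurentPolynomial.toAdjoinRoot (hn : n ≠ 0) :
    R[T;T⁻¹] →+* AdjoinRoot (X ^ n - 1 : R[X]) :=
  eval₂ (AdjoinRoot.of _) (AdjoinRoot.rootUnitOfXPowSubOne R hn)

namespace LaurentPolynomial

theorem toAdjoinRoot_toLaurent (hn : n ≠ 0) (g : R[X]) :
    toAdjoinRoot R hn (toLaurent g) = AdjoinRoot.mk _ g := by
  rw [toAdjoinRoot, eval₂_toLaurent, ← AdjoinRoot.aeval_eq]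
  rfl

theorem toAdjoinRoot_surjective (hn : n ≠ 0) : Function.Surjective (toAdjoinRoot R hn) := by
  intro y
  obtain ⟨g, rfl⟩ := AdjoinRoot.mk_surjective y
  exact ⟨toLaurent g, toAdjoinRoot_toLaurent R hn g⟩

theorem ker_toAdjoinRoot (hn : n ≠ 0) : RingHom.ker (toAdjoinRoot R hn) = Ideal.span {T n - 1} := by
  have hq : toLaurent (X ^ n - 1 : R[X]) = T n - 1 := by simp
  apply le_antisymm
  · intro f hf
    obtain ⟨m, g, hg⟩ := exists_T_pow f
    have hdvd : (X ^ n - 1 : R[X]) ∣ g := by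
      rw [← AdjoinRoot.mk_eq_zero, ← toAdjoinRoot_toLaurent R hn, hg, map_mul,
        RingHom.mem_ker.mp hf, zero_mul]
    obtain ⟨h, rfl⟩ := hdvd
    rw [Ideal.mem_span_singleton, ← hq]
    refine ⟨toLaurent h * T (-m), ?_⟩
    rw [← mul_assoc, ← map_mul, hg, mul_assoc, ← T_add]
    simp
  · rw [Ideal.span_le, Set.singleton_subset_iff, ← hq, SetLike.mem_coe, RingHom.mem_ker,
      toAdjoinRoot_toLaurent, AdjoinRoot.mk_self]

theorem algebraMap_norm_toAdjoinRoot [Nontrivial R] (hn : n ≠ 0) {K : Type*} [CommRing K]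
    [IsDomain K] [Algebra R K] {ζ : Kˣ} (hζ : IsPrimitiveRoot (ζ : K) n) (p : R[T;T⁻¹]) :
    algebraMap R K (Algebra.norm R (toAdjoinRoot R hn p)) =
      ∏ j : Fin n, eval₂ (algebraMap R K) (ζ ^ (j : ℕ)) p := by
  have hq := monic_X_pow_sub_one R hn
  have hdeg : (X ^ n - 1 : R[X]).natDegree = n := by
    simpa using natDegree_X_pow_sub_C (r := (1 : R))
  let b := (AdjoinRoot.powerBasis' hq).basis.reindex (finCongr hdeg)
  have hb : ∀ i, b i = AdjoinRoot.root _ ^ (i : ℕ) := fun i => by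
    simp only [b, Module.Basis.coe_reindex, PowerBasis.coe_basis, AdjoinRoot.powerBasis'_gen,
      Function.comp_apply]
    rfl
  have hζj : ∀ j : ℕ, (X ^ n - 1 : R[X]).eval₂ (Algebra.ofId R K) ((ζ : K) ^ j) = 0 := fun j => by
    simp [pow_right_comm _ j n, hζ.pow_eq_one]
  let ψ : Fin n → AdjoinRoot (X ^ n - 1 : R[X]) →ₐ[R] K := fun j =>
    AdjoinRoot.liftAlgHom _ (Algebra.ofId R K) _ (hζj j)
  have hψ : Function.Injective fun j => ψ j (AdjoinRoot.root _) := fun i j hij =>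
    Fin.ext (hζ.pow_inj i.isLt j.isLt (by simpa [ψ, AdjoinRoot.liftAlgHom_root] using hij))
  rw [Algebra.algebraMap_norm_eq_prod_of_pow_basis b hb ψ hψ]
  refine Finset.prod_congr rfl fun j _ => ?_
  change ((ψ j : _ →+* K).comp (toAdjoinRoot R hn)) p = _
  rw [toAdjoinRoot, comp_eval₂]
  congr 2
  · ext r
    simp [ψ]
  · ext
    simp [ψ, AdjoinRoot.rootUnitOfXPowSubOne]

theorem natCard_quotient_eq_natAbs_norm (hn : n ≠ 0) (p : ℤ[T;T⁻¹])
    (hp : Algebra.norm ℤ (toAdjoinRoot ℤ hn p) ≠ 0) :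
    Nat.card (ℤ[T;T⁻¹] ⧸ Ideal.span {p, T n - 1}) =
      (Algebra.norm ℤ (toAdjoinRoot ℤ hn p)).natAbs := by
  have := (monic_X_pow_sub_one ℤ hn).free_adjoinRoot
  have := (monic_X_pow_sub_one ℤ hn).finite_adjoinRoot
  have hideal : Ideal.span {p, T n - 1} = Ideal.span {p} ⊔ RingHom.ker (toAdjoinRoot ℤ hn) := by
    rw [ker_toAdjoinRoot, Ideal.span_insert]
  rw [hideal, Nat.card_congr (RingHom.quotientSupKerEquivOfSurjective _
    (toAdjoinRoot_surjective ℤ hn) _).toEquiv, Ideal.map_span, Set.image_singleton]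
  exact Algebra.natCard_quotient_span_singleton_eq_natAbs_norm _ hp

end LaurentPolynomial

end CyclicQuotient

theorem Complex.exp_two_pi_I_mul_div_eq_pow (j n : ℕ) :
    Complex.exp (2 * Real.pi * Complex.I * j / n) =
      Complex.exp (2 * Real.pi * Complex.I / n) ^ j := by
  rw [← Complex.exp_nat_mul]
  ring_nf

theorem intCast_norm_toAdjoinRoot_eq_prod_laurentEval {n : ℕ} (hn : n ≠ 0) (p : ℤ[T;T⁻¹]) :
    (Algebra.norm ℤ (toAdjoinRoot ℤ hn p) : ℂ) = ∏ j ∈ Finset.range n,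
      laurentEval (Units.mk0 (Complex.exp (2 * Real.pi * Complex.I * j / n))
        (Complex.exp_ne_zero _)) p := by
  let ζ : ℂˣ := Units.mk0 (Complex.exp (2 * Real.pi * Complex.I / n)) (Complex.exp_ne_zero _)
  rw [← Fin.prod_univ_eq_prod_range, ← eq_intCast (algebraMap ℤ ℂ),
    algebraMap_norm_toAdjoinRoot ℤ hn (ζ := ζ) (Complex.isPrimitiveRoot_exp n hn)]
  refine Finset.prod_congr rfl fun j _ => ?_
  rw [laurentEval_eq_eval₂]
  congr
  ext
  simp [ζ, Complex.exp_two_pi_I_mul_div_eq_pow]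

theorem fox_formula_general (p : LaurentPolynomial ℤ) (n : ℕ) (hn : 1 ≤ n) :
    (Finite (LaurentPolynomial ℤ ⧸ Ideal.span {p, T (n : ℤ) - 1}) ↔
      ∀ z : ℂˣ, (z : ℂ) ^ n = 1 → laurentEval z p ≠ 0) ∧
    ((∀ z : ℂˣ, (z : ℂ) ^ n = 1 → laurentEval z p ≠ 0) →
      (Nat.card (LaurentPolynomial ℤ ⧸ Ideal.span {p, T (n : ℤ) - 1}) : ℝ) =
        ‖∏ j ∈ Finset.range n,
          laurentEval (Units.mk0 (Complex.exp (2 * Real.pi * Complex.I * j / n))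
            (Complex.exp_ne_zero _)) p‖) := by
  have hn0 : n ≠ 0 := Nat.one_le_iff_ne_zero.mp hn
  have hnorm := intCast_norm_toAdjoinRoot_eq_prod_laurentEval hn0 p
  have hnorm_ne : (∀ z : ℂˣ, (z : ℂ) ^ n = 1 → laurentEval z p ≠ 0) →
      Algebra.norm ℤ (toAdjoinRoot ℤ hn0 p) ≠ 0 := fun h => by
    rw [← Int.cast_ne_zero (α := ℂ), hnorm]
    refine Finset.prod_ne_zero_iff.mpr fun j _ => h _ ?_
    rw [Units.val_mk0, Complex.exp_two_pi_I_mul_div_eq_pow, pow_right_comm,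
      (Complex.isPrimitiveRoot_exp n hn0).pow_eq_one, one_pow]
  refine ⟨⟨fun hfin z hz hpz => ?_, fun h => ?_⟩, fun h => ?_⟩
  · refine not_finite_iff_infinite.mpr (Ideal.infinite_quotient_of_le_ker
      (laurentEval z : ℤ[T;T⁻¹] →+* ℂ) ?_) hfin
    rw [Ideal.span_le, Set.insert_subset_iff, Set.singleton_subset_iff]
    exact ⟨hpz, by simp [laurentEval_eq_eval₂, hz]⟩
  · refine Nat.finite_of_card_ne_zero ?_
    rw [natCard_quotient_eq_natAbs_norm hn0 p (hnorm_ne h)]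
    exact Int.natAbs_ne_zero.mpr (hnorm_ne h)
  · rw [natCard_quotient_eq_natAbs_norm hn0 p (hnorm_ne h), ← hnorm, Complex.norm_intCast,
      Nat.cast_natAbs, Int.cast_abs]

/-- Fox's formula. Let `Λ = ℤ[t^{±1}]`, let `p ∈ Λ` with `|p(1)| = 1`, and `n ≥ 1`. Then
`Λ/(p(t), tⁿ − 1)` is finite if and only if `p(ζ) ≠ 0` for every `n`-th root of unity `ζ`,
and in that case its order equals `|∏_{j=0}^{n-1} p(e^{2πij/n})|`. -/
theorem fox_formula (p : LaurentPolynomial ℤ) (n : ℕ) (hn : 1 ≤ n)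
    (hp1 : ‖laurentEval 1 p‖ = 1) :
    (Finite (LaurentPolynomial ℤ ⧸ Ideal.span {p, T (n : ℤ) - 1}) ↔
      ∀ z : ℂˣ, (z : ℂ) ^ n = 1 → laurentEval z p ≠ 0) ∧
    ((∀ z : ℂˣ, (z : ℂ) ^ n = 1 → laurentEval z p ≠ 0) →
      (Nat.card (LaurentPolynomial ℤ ⧸ Ideal.span {p, T (n : ℤ) - 1}) : ℝ) =
        ‖∏ j ∈ Finset.range n,
          laurentEval (Units.mk0 (Complex.exp (2 * Real.pi * Complex.I * j / n))
            (Complex.exp_ne_zero _)) p‖) :=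
  fox_formula_general p n hn
end

section
/- Let G be a group and define its rational derived series by G_r^{(0)} = G and G_r^{(n+1)} = { g ∈ G_r^{(n)} : g^k ∈ [G_r^{(n)}, G_r^{(n)}] for some nonzero integer k }. Then each G_r^{(n)} is a normal subgroup of G, and the quotient G_r^{(n)}/G_r^{(n+1)} is a torsion-free abelian group. -/
/-- The rational derived series of a group `G` (as a sequence of subsets):
`G_r⁽⁰⁾ = G` and `G_r⁽ⁿ⁺¹⁾ = {g ∈ G_r⁽ⁿ⁾ : gᵏ ∈ [G_r⁽ⁿ⁾, G_r⁽ⁿ⁾] for some k ≠ 0}`. -/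
def rationalDerivedSeries (G : Type*) [Group G] : ℕ → Set G
  | 0 => Set.univ
  | n + 1 =>
    {g : G | g ∈ rationalDerivedSeries G n ∧ ∃ k : ℤ, k ≠ 0 ∧ g ^ k ∈
      Subgroup.closure {x : G | ∃ a ∈ rationalDerivedSeries G n,
        ∃ b ∈ rationalDerivedSeries G n, x = a * b * a⁻¹ * b⁻¹}}

private theorem rds_aux (G : Type*) [Group G] : ∀ n : ℕ,
    ((1 : G) ∈ rationalDerivedSeries G n) ∧
    (∀ a b : G, a ∈ rationalDerivedSeries G n → b ∈ rationalDerivedSeries G n →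
      a * b ∈ rationalDerivedSeries G n) ∧
    (∀ a : G, a ∈ rationalDerivedSeries G n → a⁻¹ ∈ rationalDerivedSeries G n) ∧
    (∀ g a : G, a ∈ rationalDerivedSeries G n →
      g * a * g⁻¹ ∈ rationalDerivedSeries G n) := by
  intro n
  induction n with
  | zero => simp [rationalDerivedSeries]
  | succ n ih =>
    obtain ⟨h1, hmul, hinv, hconj⟩ := ih
    set Cset : Set G := {x : G | ∃ a ∈ rationalDerivedSeries G n,
        ∃ b ∈ rationalDerivedSeries G n, x = a * b * a⁻¹ * b⁻¹} with hCset
    set C : Subgroup G := Subgroup.closure Cset with hC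
    have hmem : ∀ g : G, g ∈ rationalDerivedSeries G (n + 1) ↔
        g ∈ rationalDerivedSeries G n ∧ ∃ k : ℤ, k ≠ 0 ∧ g ^ k ∈ C := by
      intro g; rfl
    have hCnormal : C.Normal := by
      constructor
      intro x hx g
      induction hx using Subgroup.closure_induction with
      | mem y hy =>
        obtain ⟨a, ha, b, hb, rfl⟩ := hy
        apply Subgroup.subset_closure
        refine ⟨g * a * g⁻¹, hconj g a ha, g * b * g⁻¹, hconj g b hb, ?_⟩
        group
      | one => simpa using C.one_mem
      | mul y z _ _ hy hz =>
        have : g * (y * z) * g⁻¹ = (g * y * g⁻¹) * (g * z * g⁻¹) := by group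
        rw [this]; exact C.mul_mem hy hz
      | inv y _ hy =>
        have : g * y⁻¹ * g⁻¹ = (g * y * g⁻¹)⁻¹ := by group
        rw [this]; exact C.inv_mem hy
    have hcomm : ∀ a b : G, a ∈ rationalDerivedSeries G n → b ∈ rationalDerivedSeries G n →
        Commute (QuotientGroup.mk a : G ⧸ C) (QuotientGroup.mk b) := by
      intro a b ha hb
      have h : ((QuotientGroup.mk (a * b * a⁻¹ * b⁻¹) : G ⧸ C)) = 1 :=
        (QuotientGroup.eq_one_iff _).2 (Subgroup.subset_closure ⟨a, ha, b, hb, rfl⟩)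
      rw [← commutatorElement_eq_one_iff_commute]
      simpa [commutatorElement_def, QuotientGroup.mk_mul, QuotientGroup.mk_inv] using h
    refine ⟨⟨h1, 1, one_ne_zero, by simpa using C.one_mem⟩, ?_, ?_, ?_⟩
    · rintro a b ⟨ha, k, hk, hak⟩ ⟨hb, l, hl, hbl⟩
      refine (hmem _).2 ⟨hmul a b ha hb, k * l, mul_ne_zero hk hl, ?_⟩
      rw [← QuotientGroup.eq_one_iff]
      have hka : ((QuotientGroup.mk a : G ⧸ C)) ^ k = 1 := by
        rw [← QuotientGroup.mk_zpow]; exact (QuotientGroup.eq_one_iff _).2 hak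
      have hkb : ((QuotientGroup.mk b : G ⧸ C)) ^ l = 1 := by
        rw [← QuotientGroup.mk_zpow]; exact (QuotientGroup.eq_one_iff _).2 hbl
      calc (QuotientGroup.mk ((a * b) ^ (k * l)) : G ⧸ C)
          = (QuotientGroup.mk a * QuotientGroup.mk b) ^ (k * l) := by
            rw [← QuotientGroup.mk_mul, QuotientGroup.mk_zpow]
        _ = (QuotientGroup.mk a : G ⧸ C) ^ (k * l) * (QuotientGroup.mk b : G ⧸ C) ^ (k * l) :=
            (hcomm a b ha hb).mul_zpow _
        _ = 1 := by
            rw [zpow_mul, hka, one_zpow, one_mul, mul_comm k l, zpow_mul, hkb, one_zpow]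
    · rintro a ⟨ha, k, hk, hak⟩
      refine (hmem _).2 ⟨hinv a ha, k, hk, ?_⟩
      rw [inv_zpow]
      exact C.inv_mem hak
    · rintro g a ⟨ha, k, hk, hak⟩
      refine (hmem _).2 ⟨hconj g a ha, k, hk, ?_⟩
      have : (g * a * g⁻¹) ^ k = g * a ^ k * g⁻¹ := by
        rw [conj_zpow]
      rw [this]
      exact hCnormal.conj_mem _ hak g

/-- Each term `G_r⁽ⁿ⁾` of the rational derived series is a normal subgroup of `G`
(it contains `1`, is closed under products, inverses, and conjugation by arbitrary
elements of `G`), and the quotient `G_r⁽ⁿ⁾/G_r⁽ⁿ⁺¹⁾` is torsion-free abelian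
(commutators of elements of `G_r⁽ⁿ⁾` lie in `G_r⁽ⁿ⁺¹⁾`, and if a nonzero power of
`a ∈ G_r⁽ⁿ⁾` lies in `G_r⁽ⁿ⁺¹⁾` then so does `a`). -/
theorem rationalDerivedSeries_normal_and_torsionFree_abelian_quotient
    (G : Type*) [Group G] (n : ℕ) :
    ((1 : G) ∈ rationalDerivedSeries G n) ∧
    (∀ a b : G, a ∈ rationalDerivedSeries G n → b ∈ rationalDerivedSeries G n →
      a * b ∈ rationalDerivedSeries G n) ∧
    (∀ a : G, a ∈ rationalDerivedSeries G n → a⁻¹ ∈ rationalDerivedSeries G n) ∧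
    (∀ g a : G, a ∈ rationalDerivedSeries G n →
      g * a * g⁻¹ ∈ rationalDerivedSeries G n) ∧
    (∀ a b : G, a ∈ rationalDerivedSeries G n → b ∈ rationalDerivedSeries G n →
      a * b * a⁻¹ * b⁻¹ ∈ rationalDerivedSeries G (n + 1)) ∧
    (∀ a : G, a ∈ rationalDerivedSeries G n → ∀ k : ℤ, k ≠ 0 →
      a ^ k ∈ rationalDerivedSeries G (n + 1) → a ∈ rationalDerivedSeries G (n + 1)) := by
  obtain ⟨h1, hmul, hinv, hconj⟩ := rds_aux G n
  refine ⟨h1, hmul, hinv, hconj, ?_, ?_⟩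
  · intro a b ha hb
    refine ⟨hmul _ _ (hmul _ _ (hmul _ _ ha hb) (hinv _ ha)) (hinv _ hb), 1, one_ne_zero, ?_⟩
    rw [zpow_one]
    exact Subgroup.subset_closure ⟨a, ha, b, hb, rfl⟩
  · rintro a ha k hk ⟨-, l, hl, hakl⟩
    refine ⟨ha, k * l, mul_ne_zero hk hl, ?_⟩
    rw [zpow_mul]
    exact hakl
end
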